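/- Let a ≠ 0, δ = (4ω₂−ω₁)/(2a), let N_KdV5 be the 4×4 matrix-valued map on ℝ⁴ with rows (2x−δ, y, 0, p_y), (y, 0, −p_y, 0), (0, 0, 2x−δ, y), (0, 0, y, 0), set N* := (N_KdV5)ᵀ, and let ∇f denote the column vector (∂f/∂p_x, ∂f/∂p_y, ∂f/∂x, ∂f/∂y). Then at every point with y ≠ 0: N*·∇H_KdV5 = (2x−δ)·∇H_KdV5 + (1/(4a))·∇K_KdV5 and N*·∇K_KdV5 = 4a·y²·∇H_KdV5. Hence the control matrix of the KdV₅ system is M = [[2x−δ, 1/(4a)], [4a·y², 0]]. -/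

import Mathlib

open Matrix

/-- Partial derivative `∂f/∂z^l` at `z`, coordinates `z = (p_x, p_y, x, y)`. -/
noncomputable def pd (l : Fin 4) (f : (Fin 4 → ℝ) → ℝ) (z : Fin 4 → ℝ) : ℝ :=
  fderiv ℝ f z (Pi.single l 1)

/-- Gradient column vector `(∂f/∂p_x, ∂f/∂p_y, ∂f/∂x, ∂f/∂y)`. -/
noncomputable def grad (f : (Fin 4 → ℝ) → ℝ) (z : Fin 4 → ℝ) : Fin 4 → ℝ :=
  fun i => pd i f z

/-- The KdV₅ recursion operator, with `δ = (4ω₂−ω₁)/(2a)`. -/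
noncomputable def NKdV5 (a ω₁ ω₂ : ℝ) (z : Fin 4 → ℝ) : Matrix (Fin 4) (Fin 4) ℝ :=
  let δ := (4*ω₂ - ω₁)/(2*a)
  let py := z 1; let x := z 2; let y := z 3
  !![2*x - δ, y, 0, py;
     y, 0, -py, 0;
     0, 0, 2*x - δ, y;
     0, 0, y, 0]

/-- The KdV₅ Hamiltonian, as a function of `z = (p_x, p_y, x, y)`. -/
noncomputable def HKdV5 (a ω₁ ω₂ μ : ℝ) (z : Fin 4 → ℝ) : ℝ :=
  let px := z 0; let py := z 1; let x := z 2; let y := z 3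
  (1/2)*(px^2 + py^2) + (1/2)*(ω₁*x^2 + ω₂*y^2) + a*x*y^2 + 2*a*x^3 + μ/(2*y^2)

/-- The KdV₅ second integral, as a function of `z = (p_x, p_y, x, y)`. -/
noncomputable def KKdV5 (a ω₁ ω₂ μ : ℝ) (z : Fin 4 → ℝ) : ℝ :=
  let px := z 0; let py := z 1; let x := z 2; let y := z 3
  4*a*y*px*py + (4*ω₂ - ω₁ - 4*a*x)*(py^2 + μ/y^2)
    + a^2*y^4 + 4*a^2*x^2*y^2 + 4*a*ω₂*x*y^2 + ω₂*(4*ω₂ - ω₁)*y^2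

/-!
The gradients of `H` and `K` are computed in closed form by the product and quotient rules;
after substituting them, each component of both identities is an identity between rational
functions of `p_x, p_y, x, y`.
-/

theorem HasFDerivAt.div {𝕜 E : Type*} [NontriviallyNormedField 𝕜] [NormedAddCommGroup E]
    [NormedSpace 𝕜 E] {c d : E → 𝕜} {c' d' : E →L[𝕜] 𝕜} {x : E}
    (hc : HasFDerivAt c c' x) (hd : HasFDerivAt d d' x) (hx : d x ≠ 0) :
    HasFDerivAt (fun y => c y / d y) ((d x ^ 2)⁻¹ • (d x • c' - c x • d')) x := by
  simp_rw [div_eq_mul_inv]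
  refine (hc.mul ((hasDerivAt_inv hx).comp_hasFDerivAt x hd)).congr_fderiv ?_
  ext v
  simp only [Function.comp_apply, _root_.add_apply, _root_.sub_apply, _root_.smul_apply,
    smul_eq_mul, neg_mul, mul_neg]
  field_simp
  ring

theorem grad_eq_of_hasFDerivAt {f : (Fin 4 → ℝ) → ℝ} {f' : (Fin 4 → ℝ) →L[ℝ] ℝ}
    {z : Fin 4 → ℝ} (h : HasFDerivAt f f' z) : grad f z = fun l => f' (Pi.single l 1) :=
  funext fun l => by rw [grad, pd, h.fderiv]

section

variable (a ω₁ ω₂ μ : ℝ) {z : Fin 4 → ℝ}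

theorem grad_HKdV5 (hy : z 3 ≠ 0) :
    grad (HKdV5 a ω₁ ω₂ μ) z =
      ![z 0, z 1, ω₁ * z 2 + a * z 3 ^ 2 + 6 * a * z 2 ^ 2,
        ω₂ * z 3 + 2 * a * z 2 * z 3 - μ / z 3 ^ 3] := by
  have c := fun i : Fin 4 => hasFDerivAt_apply (𝕜 := ℝ) i z
  have kinetic := (((c 0).pow 2).add ((c 1).pow 2)).const_mul (1 / 2)
  have harmonic :=
    ((((c 2).pow 2).const_mul ω₁).add (((c 3).pow 2).const_mul ω₂)).const_mul (1 / 2)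
  have xy2 := ((c 2).const_mul a).mul ((c 3).pow 2)
  have x3 := ((c 2).pow 3).const_mul (2 * a)
  have centrifugal := (hasFDerivAt_const μ z).div (((c 3).pow 2).const_mul 2) (by simp [hy])
  have hH : HasFDerivAt (HKdV5 a ω₁ ω₂ μ) _ z :=
    (((kinetic.add harmonic).add xy2).add x3).add centrifugal
  rw [grad_eq_of_hasFDerivAt hH]
  funext l
  fin_cases l <;>
    simp only [_root_.add_apply, _root_.sub_apply, _root_.smul_apply, _root_.zero_apply,
      ContinuousLinearMap.proj_apply, Pi.single_apply, Fin.reduceFinMk, Fin.isValue, Fin.reduceEq,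
      ↓reduceIte, cons_val, smul_eq_mul, nsmul_eq_mul] <;>
    field_simp <;> ring

theorem grad_KKdV5 (hy : z 3 ≠ 0) :
    grad (KKdV5 a ω₁ ω₂ μ) z =
      ![4 * a * z 3 * z 1,
        4 * a * z 3 * z 0 + 2 * (4 * ω₂ - ω₁ - 4 * a * z 2) * z 1,
        -4 * a * (z 1 ^ 2 + μ / z 3 ^ 2) + 8 * a ^ 2 * z 2 * z 3 ^ 2 + 4 * a * ω₂ * z 3 ^ 2,
        4 * a * z 0 * z 1 - 2 * (4 * ω₂ - ω₁ - 4 * a * z 2) * μ / z 3 ^ 3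
          + 4 * a ^ 2 * z 3 ^ 3 + 8 * a ^ 2 * z 2 ^ 2 * z 3 + 8 * a * ω₂ * z 2 * z 3
          + 2 * ω₂ * (4 * ω₂ - ω₁) * z 3] := by
  have c := fun i : Fin 4 => hasFDerivAt_apply (𝕜 := ℝ) i z
  have ypxpy := (((c 3).const_mul (4 * a)).mul (c 0)).mul (c 1)
  have coeff := (hasFDerivAt_const (4 * ω₂ - ω₁) z).sub ((c 2).const_mul (4 * a))
  have angular := ((c 1).pow 2).add ((hasFDerivAt_const μ z).div ((c 3).pow 2) (by simp [hy]))
  have y4 := ((c 3).pow 4).const_mul (a ^ 2)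
  have x2y2 := (((c 2).pow 2).const_mul (4 * a ^ 2)).mul ((c 3).pow 2)
  have xy2 := ((c 2).const_mul (4 * a * ω₂)).mul ((c 3).pow 2)
  have y2 := ((c 3).pow 2).const_mul (ω₂ * (4 * ω₂ - ω₁))
  have hK : HasFDerivAt (KKdV5 a ω₁ ω₂ μ) _ z :=
    ((((ypxpy.add (coeff.mul angular)).add y4).add x2y2).add xy2).add y2
  rw [grad_eq_of_hasFDerivAt hK]
  funext l
  fin_cases l <;>
    simp only [_root_.add_apply, _root_.sub_apply, _root_.smul_apply, _root_.zero_apply,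
      ContinuousLinearMap.proj_apply, Pi.single_apply, Pi.add_apply, Pi.sub_apply, Pi.mul_apply,
      Fin.reduceFinMk, Fin.isValue, Fin.reduceEq, ↓reduceIte, cons_val, smul_eq_mul,
      nsmul_eq_mul] <;>
    field_simp <;> ring

theorem NKdV5_transpose_mulVec_grad_HKdV5 (ha : a ≠ 0) (hy : z 3 ≠ 0) :
    (NKdV5 a ω₁ ω₂ z)ᵀ *ᵥ grad (HKdV5 a ω₁ ω₂ μ) z
      = (2 * z 2 - (4 * ω₂ - ω₁) / (2 * a)) • grad (HKdV5 a ω₁ ω₂ μ) z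
        + (1 / (4 * a)) • grad (KKdV5 a ω₁ ω₂ μ) z := by
  rw [grad_HKdV5 a ω₁ ω₂ μ hy, grad_KKdV5 a ω₁ ω₂ μ hy]
  funext l
  fin_cases l <;>
    simp only [NKdV5, mulVec, dotProduct, Fin.sum_univ_four, transpose_apply, of_apply,
      Fin.reduceFinMk, Fin.isValue, cons_val, Pi.add_apply, Pi.smul_apply, smul_eq_mul] <;>
    field_simp <;> ring

theorem NKdV5_transpose_mulVec_grad_KKdV5 (ha : a ≠ 0) (hy : z 3 ≠ 0) :
    (NKdV5 a ω₁ ω₂ z)ᵀ *ᵥ grad (KKdV5 a ω₁ ω₂ μ) z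
      = (4 * a * z 3 ^ 2) • grad (HKdV5 a ω₁ ω₂ μ) z := by
  rw [grad_HKdV5 a ω₁ ω₂ μ hy, grad_KKdV5 a ω₁ ω₂ μ hy]
  funext l
  fin_cases l <;>
    simp only [NKdV5, mulVec, dotProduct, Fin.sum_univ_four, transpose_apply, of_apply,
      Fin.reduceFinMk, Fin.isValue, cons_val, Pi.smul_apply, smul_eq_mul] <;>
    field_simp <;> ring

end

/-- with `N* = (N_KdV5)ᵀ`, at every point with `y ≠ 0` one has
`N*·∇H = (2x−δ)·∇H + (1/(4a))·∇K` and `N*·∇K = 4ay²·∇H`; hence the control matrix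
of the KdV₅ system is `[[2x−δ, 1/(4a)], [4ay², 0]]`. -/
theorem NKdV5_control_matrix (a ω₁ ω₂ μ : ℝ) (ha : a ≠ 0) (z : Fin 4 → ℝ) (hy : z 3 ≠ 0) :
    (NKdV5 a ω₁ ω₂ z)ᵀ.mulVec (grad (HKdV5 a ω₁ ω₂ μ) z)
        = (2*(z 2) - (4*ω₂ - ω₁)/(2*a)) • grad (HKdV5 a ω₁ ω₂ μ) z
          + (1/(4*a)) • grad (KKdV5 a ω₁ ω₂ μ) z
    ∧ (NKdV5 a ω₁ ω₂ z)ᵀ.mulVec (grad (KKdV5 a ω₁ ω₂ μ) z)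
        = (4*a*(z 3)^2) • grad (HKdV5 a ω₁ ω₂ μ) z :=
  ⟨NKdV5_transpose_mulVec_grad_HKdV5 a ω₁ ω₂ μ ha hy,
    NKdV5_transpose_mulVec_grad_KKdV5 a ω₁ ω₂ μ ha hy⟩
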